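/- If S ⊆ 𝒲 is infinite and contains no facing triple, then S contains a chain: there is an injective sequence (c_n)_{n∈ℕ} of walls of S such that c_n separates c_{n−1} and c_{n+1} for every n ≥ 1. -/

import Mathlib

open Set

variable {X : Type*}

/-- A wall: a subset with nonempty complement and nonempty itself. -/
def IsWall (h : Set X) : Prop := h.Nonempty ∧ hᶜ.Nonempty

/-- Walls `h` and `k` cross. -/
def Crosses (h k : Set X) : Prop :=
  (h ∩ k).Nonempty ∧ (h ∩ kᶜ).Nonempty ∧ (hᶜ ∩ k).Nonempty ∧ (hᶜ ∩ kᶜ).Nonempty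

/-- The wall `u` lies in the halfspace `H` of the wall `w`. -/
def LiesIn (u H w : Set X) : Prop := u ≠ w ∧ (u ⊆ H ∨ uᶜ ⊆ H)

/-- The wall `w` separates the walls `u` and `v`. -/
def Separates (w u v : Set X) : Prop :=
  u ≠ v ∧ u ≠ w ∧ v ≠ w ∧
  ∃ u' v' w', (u' = u ∨ u' = uᶜ) ∧ (v' = v ∨ v' = vᶜ) ∧ (w' = w ∨ w' = wᶜ) ∧
    u' ⊆ w' ∧ v' ⊆ w'ᶜ

/-- `S` contains a facing triple. -/
def HasFacingTriple (S : Set (Set X)) : Prop :=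
  ∃ a ∈ S, ∃ b ∈ S, ∃ c ∈ S, a ≠ b ∧ a ≠ c ∧ b ≠ c ∧
    ∃ a' b' c', (a' = a ∨ a' = aᶜ) ∧ (b' = b ∨ b' = bᶜ) ∧ (c' = c ∨ c' = cᶜ) ∧
      Disjoint a' b' ∧ Disjoint a' c' ∧ Disjoint b' c'

/-- `S` is inseparable with respect to the wall collection `W`. -/
def InseparableIn (W S : Set (Set X)) : Prop :=
  ∀ u ∈ S, ∀ v ∈ S, ∀ w ∈ W, Separates w u v → w ∈ S

/-- `S` is unidirectional: for each wall `w ∈ S`, at most one of the two halfspaces of `w`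
contains infinitely many walls of `S`. -/
def Unidirectional (S : Set (Set X)) : Prop :=
  ∀ w ∈ S, {u ∈ S | LiesIn u w w}.Finite ∨ {u ∈ S | LiesIn u wᶜ w}.Finite

/-- `V` is a UBS in the wall collection `W`. -/
def IsUBS (W V : Set (Set X)) : Prop :=
  V ⊆ W ∧ V.Infinite ∧ InseparableIn W V ∧ Unidirectional V ∧ ¬ HasFacingTriple V

/-- Almost-equivalence of sets of walls. -/
def AlmostEq (S T : Set (Set X)) : Prop := (S \ T).Finite ∧ (T \ S).Finite

/-- `U` is a minimal UBS in `W`. -/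
def MinUBS (W U : Set (Set X)) : Prop :=
  IsUBS W U ∧ ∀ U', IsUBS W U' → U' ⊆ U → AlmostEq U' U

/-- `A ≺ B`: every wall of `B` crosses all but finitely many walls of `A`. -/
def Prec (A B : Set (Set X)) : Prop := ∀ b ∈ B, {a ∈ A | ¬ Crosses b a}.Finite

/-- Distinct members of `W` determine distinct partitions. -/
def Admissible (W : Set (Set X)) : Prop := ∀ h ∈ W, ∀ k ∈ W, h ≠ k → h ≠ kᶜ

/-- No infinite subset of `W` consists of pairwise-crossing walls. -/
def NoInfCross (W : Set (Set X)) : Prop := ∀ S ⊆ W, S.Pairwise Crosses → S.Finite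

/-- `W` has dimension at most `D`: every pairwise-crossing subset has cardinality at most `D`. -/
def DimLE (W : Set (Set X)) (D : ℕ) : Prop :=
  ∀ S ⊆ W, S.Pairwise Crosses → S.Finite ∧ S.ncard ≤ D

/-- `c` is a chain: an injective sequence of walls with `c n` separating `c (n-1)` and
`c (n+1)` for `n ≥ 1`. -/
def IsChainSeq (c : ℕ → Set X) : Prop :=
  Function.Injective c ∧ ∀ n, Separates (c (n + 1)) (c n) (c (n + 2))

/-- The chain `c` is inextensible in `S`: no wall of `S` has a halfspace containing every
term of `c`. -/
def InextensibleIn (S : Set (Set X)) (c : ℕ → Set X) : Prop :=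
  ¬ ∃ w ∈ S, ∃ H, (H = w ∨ H = wᶜ) ∧ ∀ n, LiesIn (c n) H w

/-- The inseparable closure in `W` of a set `C` of walls. -/
def insepClosure (W C : Set (Set X)) : Set (Set X) :=
  ⋂₀ {S | C ⊆ S ∧ S ⊆ W ∧ InseparableIn W S}

/-! By infinite Ramsey for pairs, an injective sequence in `S` has a subsequence all of whose pairs
are in the same relative position: crossing, nested upwards, nested downwards, disjoint, or with
disjoint complements. The first is excluded by `NoInfCross`, the last two would give a facing
triple, and a nested sequence of distinct walls is a chain. -/

section Ramsey

variable {κ : Type*} [Finite κ]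

lemma exists_lt_and_infinite_color_class (col : ℕ → ℕ → κ) {A : Set ℕ}
    (hA : A.Infinite) : ∃ a ∈ A, ∃ c, {x ∈ A | a < x ∧ col a x = c}.Infinite := by
  obtain ⟨a, ha⟩ := hA.nonempty
  refine ⟨a, ha, ?_⟩
  by_contra! hfin
  have hcover : A ⊆ Iic a ∪ ⋃ c, {x ∈ A | a < x ∧ col a x = c} := fun x hx =>
    (le_or_gt x a).imp id fun hax => mem_iUnion.2 ⟨col a x, hx, hax, rfl⟩
  exact hA (((finite_Iic a).union (finite_iUnion hfin)).subset hcover)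

lemma exists_strictMono_color_eq_of_lt (col : ℕ → ℕ → κ) :
    ∃ a : ℕ → ℕ, StrictMono a ∧ ∃ c : ℕ → κ, ∀ i j, i < j → col (a i) (a j) = c i := by
  choose a ha c hc using fun A : {A : Set ℕ // A.Infinite} =>
    exists_lt_and_infinite_color_class col A.2
  let next (A : {A : Set ℕ // A.Infinite}) : {A : Set ℕ // A.Infinite} := ⟨_, hc A⟩
  let A (n : ℕ) := next^[n] ⟨univ, infinite_univ⟩
  have hA_succ (n : ℕ) :
      (A (n + 1)).1 = {x ∈ (A n).1 | a (A n) < x ∧ col (a (A n)) x = c (A n)} :=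
    congrArg Subtype.val (Function.iterate_succ_apply' next n _)
  have hA_anti : Antitone fun n => (A n).1 := antitone_nat_of_succ_le fun n =>
    (hA_succ n).trans_subset (sep_subset _ _)
  have key (i j : ℕ) (hij : i < j) : a (A i) < a (A j) ∧ col (a (A i)) (a (A j)) = c (A i) := by
    have hmem : a (A j) ∈ (A (i + 1)).1 := hA_anti hij (ha (A j))
    rw [hA_succ] at hmem
    exact hmem.2
  exact ⟨fun n => a (A n), strictMono_nat_of_lt_succ fun n => (key n (n + 1) n.lt_succ_self).1,
    fun n => c (A n), fun i j hij => (key i j hij).2⟩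

lemma exists_strictMono_monochromatic (col : ℕ → ℕ → κ) :
    ∃ f : ℕ → ℕ, StrictMono f ∧ ∃ c, ∀ i j, i < j → col (f i) (f j) = c := by
  obtain ⟨a, ha, c, hc⟩ := exists_strictMono_color_eq_of_lt col
  obtain ⟨c₀, hc₀⟩ := Finite.exists_infinite_fiber c
  let g := Nat.Subtype.orderIsoOfNat (c ⁻¹' {c₀})
  refine ⟨fun n => a (g n), ha.comp fun i j hij => g.strictMono hij, c₀, fun i j hij => ?_⟩
  rw [hc _ _ (g.strictMono hij)]
  exact (g i).2

end Ramsey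

section Walls

variable {u v w h k : Set X}

lemma Crosses.symm (hc : Crosses h k) : Crosses k h := by
  obtain ⟨h₁, h₂, h₃, h₄⟩ := hc
  exact ⟨by rwa [inter_comm], by rwa [inter_comm], by rwa [inter_comm], by rwa [inter_comm]⟩

lemma crosses_or_subset_or_subset_or_disjoint_or_disjoint_compl (h k : Set X) :
    Crosses h k ∨ h ⊆ k ∨ k ⊆ h ∨ Disjoint h k ∨ Disjoint hᶜ kᶜ := by
  simp only [Crosses, ← not_disjoint_iff_nonempty_inter, disjoint_compl_right_iff_subset,
    disjoint_compl_left_iff_subset]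
  tauto

/-- The colours for Ramsey's theorem: the five possible relative positions of two walls. -/
def WallPosition : Fin 5 → Set X → Set X → Prop :=
  ![Crosses, (· ⊆ ·), (· ⊇ ·), Disjoint, fun h k => Disjoint hᶜ kᶜ]

lemma exists_wallPosition (h k : Set X) : ∃ c, WallPosition c h k := by
  rcases crosses_or_subset_or_subset_or_disjoint_or_disjoint_compl h k with hc | hc | hc | hc | hc
  exacts [⟨0, hc⟩, ⟨1, hc⟩, ⟨2, hc⟩, ⟨3, hc⟩, ⟨4, hc⟩]

lemma Separates.symm (hs : Separates w u v) : Separates w v u := by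
  obtain ⟨huv, huw, hvw, u', v', w', hu, hv, hw, hu', hv'⟩ := hs
  refine ⟨huv.symm, hvw, huw, v', u', w'ᶜ, hv, hu, ?_, hv', by rwa [compl_compl]⟩
  rcases hw with rfl | rfl
  exacts [Or.inr rfl, Or.inl (compl_compl _)]

lemma separates_of_subset_of_subset (huv : u ≠ v) (huw : u ≠ w) (hvw : v ≠ w)
    (hu : u ⊆ w) (hv : w ⊆ v) : Separates w u v :=
  ⟨huv, huw, hvw, u, vᶜ, w, Or.inl rfl, Or.inr rfl, Or.inl rfl, hu, compl_subset_compl.2 hv⟩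

lemma Monotone.separates {t : ℕ → Set X} (hmono : Monotone t) (ht : Function.Injective t)
    (n : ℕ) : Separates (t (n + 1)) (t n) (t (n + 2)) :=
  separates_of_subset_of_subset (ht.ne (by omega)) (ht.ne (by omega)) (ht.ne (by omega))
    (hmono (by omega)) (hmono (by omega))

lemma Antitone.separates {t : ℕ → Set X} (hanti : Antitone t) (ht : Function.Injective t)
    (n : ℕ) : Separates (t (n + 1)) (t n) (t (n + 2)) :=
  (separates_of_subset_of_subset (ht.ne (by omega)) (ht.ne (by omega)) (ht.ne (by omega))
    (hanti (by omega)) (hanti (by omega))).symm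

lemma hasFacingTriple_of_pairwise_disjoint {S : Set (Set X)} {t : ℕ → Set X}
    (ht : Function.Injective t) (htS : ∀ n, t n ∈ S) (side : Set X → Set X)
    (hside : ∀ h, side h = h ∨ side h = hᶜ)
    (hdisj : ∀ i j, i < j → Disjoint (side (t i)) (side (t j))) : HasFacingTriple S :=
  ⟨t 0, htS 0, t 1, htS 1, t 2, htS 2,
    ht.ne (by decide), ht.ne (by decide), ht.ne (by decide),
    side (t 0), side (t 1), side (t 2), hside _, hside _, hside _,
    hdisj 0 1 (by decide), hdisj 0 2 (by decide), hdisj 1 2 (by decide)⟩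

lemma NoInfCross.finite_range {W : Set (Set X)} (hW : NoInfCross W) {t : ℕ → Set X}
    (htW : ∀ n, t n ∈ W) (hcross : ∀ i j, i < j → Crosses (t i) (t j)) : (range t).Finite := by
  refine hW _ (range_subset_iff.2 htW) ?_
  rintro _ ⟨i, rfl⟩ _ ⟨j, rfl⟩ hij
  rcases lt_trichotomy i j with hlt | rfl | hgt
  exacts [hcross i j hlt, absurd rfl hij, (hcross j i hgt).symm]

end Walls

theorem infinite_no_facing_triple_contains_chain_general (W : Set (Set X))
    (hWnic : NoInfCross W)
    (S : Set (Set X)) (hSW : S ⊆ W) (hSinf : S.Infinite)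
    (hft : ¬ HasFacingTriple S) :
    ∃ c : ℕ → Set X, Function.Injective c ∧ (∀ n, c n ∈ S) ∧
      ∀ n, Separates (c (n + 1)) (c n) (c (n + 2)) := by
  let e := hSinf.natEmbedding
  choose col hcol using fun i j => exists_wallPosition (e i : Set X) (e j)
  obtain ⟨f, hf, c, hc⟩ := exists_strictMono_monochromatic col
  let t (n : ℕ) : Set X := e (f n)
  have ht : Function.Injective t := fun i j hij =>
    hf.injective (e.injective (Subtype.ext hij))
  have htS (n : ℕ) : t n ∈ S := (e (f n)).2
  have hpos (i j : ℕ) (hij : i < j) : WallPosition c (t i) (t j) := hc i j hij ▸ hcol _ _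
  refine ⟨t, ht, htS, ?_⟩
  fin_cases c
  · exact absurd (hWnic.finite_range (fun n => hSW (htS n)) hpos) (infinite_range_of_injective ht)
  · exact (monotone_nat_of_le_succ fun n => hpos n (n + 1) n.lt_succ_self).separates ht
  · exact (antitone_nat_of_succ_le fun n => hpos n (n + 1) n.lt_succ_self).separates ht
  · exact (hft (hasFacingTriple_of_pairwise_disjoint ht htS id (fun _ => Or.inl rfl) hpos)).elim
  · exact (hft (hasFacingTriple_of_pairwise_disjoint ht htS compl (fun _ => Or.inr rfl) hpos)).elim

/-- Any infinite set of walls with no facing triple contains a chain. -/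
theorem infinite_no_facing_triple_contains_chain (W : Set (Set X))
    (hWc : W.Countable) (hWwall : ∀ h ∈ W, IsWall h)
    (hWadm : Admissible W) (hWnic : NoInfCross W)
    (S : Set (Set X)) (hSW : S ⊆ W) (hSinf : S.Infinite)
    (hft : ¬ HasFacingTriple S) :
    ∃ c : ℕ → Set X, Function.Injective c ∧ (∀ n, c n ∈ S) ∧
      ∀ n, Separates (c (n + 1)) (c n) (c (n + 2)) :=
  infinite_no_facing_triple_contains_chain_general W hWnic S hSW hSinf hft
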